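/- Let ζ ∈ ℂ be a primitive 3rd root of unity and define Q : ℤ³ → ℂ by Q(m₁,m₂,m₃) = (−1)^(m₁² + m₂² + m₃² + m₁m₂) · ζ^(m₂m₃). Then for S = {(1,0,0), (0,1,0), (0,0,1), (1,1,0), (0,1,1), (1,1,1), (1,2,1), (1,2,2), (1,3,2), (2,3,2), (2,4,3)}, every Q(α) with α ∈ S is a root of unity, and the product over α ∈ S of the multiplicative order of Q(α) equals 2⁸·3⁴ = 20736. -/

import Mathlib

/-!
Since `-1` and `ζ` have coprime orders `2` and `3`, the order of `(-1)^a * ζ^b` is the product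
of the orders of its two factors: `2` or `1` according to the parity of `a`, times `3` or `1`
according to whether `3 ∣ b`. This reduces the product of the orders over `S` to a finite
computation with integers; being nonzero, it also shows that every factor has finite order.
-/

theorem orderOf_neg_one_zpow {K : Type*} [DivisionRing K] (h2 : ringChar K ≠ 2) (a : ℤ) :
    orderOf ((-1 : K) ^ a) = if Even a then 1 else 2 := by
  rcases Int.even_or_odd a with ha | ha
  · simp [ha.neg_one_zpow, ha]
  · simp [ha.neg_one_zpow, h2, Int.not_even_iff_odd.mpr ha]

theorem IsPrimitiveRoot.orderOf_zpow_of_prime {G : Type*} [DivisionCommMonoid G] {ζ : G} {p : ℕ}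
    (hp : p.Prime) (hζ : IsPrimitiveRoot ζ p) (b : ℤ) :
    orderOf (ζ ^ b) = if (p : ℤ) ∣ b then 1 else p := by
  split_ifs with hb
  · rw [(hζ.zpow_eq_one_iff_dvd b).mpr hb, orderOf_one]
  · have : Fact p.Prime := ⟨hp⟩
    refine orderOf_eq_prime ?_ (mt (hζ.zpow_eq_one_iff_dvd b).mp hb)
    rw [← zpow_natCast, ← zpow_mul, mul_comm, zpow_mul, zpow_natCast, hζ.pow_eq_one, one_zpow]

theorem orderOf_neg_one_zpow_mul_zpow {K : Type*} [Field K] (h2 : ringChar K ≠ 2) {ζ : K} {p : ℕ}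
    (hp : p.Prime) (hp2 : p ≠ 2) (hζ : IsPrimitiveRoot ζ p) (a b : ℤ) :
    orderOf ((-1 : K) ^ a * ζ ^ b) = (if Even a then 1 else 2) * (if (p : ℤ) ∣ b then 1 else p) := by
  have hcop : (orderOf ((-1 : K) ^ a)).Coprime (orderOf (ζ ^ b)) := by
    rw [orderOf_neg_one_zpow h2, hζ.orderOf_zpow_of_prime hp]
    split_ifs <;> simp [hp.odd_of_ne_two hp2]
  rw [(Commute.all _ _).orderOf_mul_eq_mul_orderOf_of_coprime hcop, orderOf_neg_one_zpow h2,
    hζ.orderOf_zpow_of_prime hp]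

theorem stmt_17 (ζ : ℂ) (hζ : IsPrimitiveRoot ζ 3)
    (Q : ℤ × ℤ × ℤ → ℂ) (hQ : ∀ m1 m2 m3 : ℤ, Q (m1, m2, m3) = (-1 : ℂ) ^ (m1^2 + m2^2 + m3^2 + m1*m2) * ζ ^ (m2*m3))
    (S : Finset (ℤ × ℤ × ℤ)) (hS : S = {(1,0,0), (0,1,0), (0,0,1), (1,1,0), (0,1,1), (1,1,1), (1,2,1), (1,2,2), (1,3,2), (2,3,2), (2,4,3)}) :
    (∀ α ∈ S, IsOfFinOrder (Q α)) ∧ ∏ α ∈ S, orderOf (Q α) = 2^8 * 3^4 := by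
  have hord : ∀ α : ℤ × ℤ × ℤ, orderOf (Q α) =
      (if Even (α.1^2 + α.2.1^2 + α.2.2^2 + α.1*α.2.1) then 1 else 2) *
        (if (3 : ℤ) ∣ α.2.1*α.2.2 then 1 else 3) := fun ⟨m1, m2, m3⟩ => by
    rw [hQ]
    exact orderOf_neg_one_zpow_mul_zpow (by simp) Nat.prime_three (by norm_num) hζ _ _
  have hprod : ∏ α ∈ S, orderOf (Q α) = 2^8 * 3^4 := by
    rw [Finset.prod_congr rfl fun α _ => hord α, hS]
    decide
  refine ⟨fun α hα => orderOf_pos_iff.mp (Nat.pos_of_ne_zero ?_), hprod⟩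
  exact Finset.prod_ne_zero_iff.mp (by rw [hprod]; norm_num) α hα
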